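/- arXiv:2508.02346 — 2 statements merged into one kernel-verified Lean document; each statement's English description precedes it below -/
import Mathlib

section
/- A collection of functions separating all weighted graphs up to isomorphism also solves the graph isomorphism problem for unweighted graphs: if functions {O_k} satisfy (G₁ ≅ G₂ ⟺ O_k(G₁) = O_k(G₂) for all k) on weighted graphs with N nodes, then for any two unweighted graphs on n nodes with 2n ≤ N, weighting one uniformly by 2 and the other uniformly by 3 and taking their disjoint union G, versus the weight-swapped union G', the graphs G and G' are isomorphic as weighted graphs if and only if the original unweighted graphs are isomorphic. -/
/-- The relabeling action of `S_N` on weighted graphs: `(σ·G)_{ij} = G_{σ⁻¹(i)σ⁻¹(j)}`. -/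
def relabel {N : ℕ} (σ : Equiv.Perm (Fin N)) (G : Matrix (Fin N) (Fin N) ℝ) :
    Matrix (Fin N) (Fin N) ℝ :=
  fun i j => G (σ⁻¹ i) (σ⁻¹ j)

/-- The disjoint union of two weighted graphs on `n` nodes each, placed as two diagonal
blocks inside an `N×N` matrix (padded by zero-weight isolated nodes). -/
noncomputable def unionW (n N : ℕ) (A B : Matrix (Fin n) (Fin n) ℝ) :
    Matrix (Fin N) (Fin N) ℝ :=
  fun i j =>
    if h : (i : ℕ) < n ∧ (j : ℕ) < n then A ⟨i, h.1⟩ ⟨j, h.2⟩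
    else if h' : n ≤ (i : ℕ) ∧ (i : ℕ) < 2 * n ∧ n ≤ (j : ℕ) ∧ (j : ℕ) < 2 * n then
      B ⟨(i : ℕ) - n, by omega⟩ ⟨(j : ℕ) - n, by omega⟩
    else 0

/-!
An isomorphism `(2A) ⊔ (3B) ≅ (3A) ⊔ (2B)` must match the entries of weight `2`, which are the
edges of `A` in the first graph and the edges of `B` in the second. So it restricts to an
isomorphism between the non-isolated parts of `A` and `B`, and since `A` and `B` have the same
number of vertices, it extends to `A ≅ B` by matching the isolated vertices in any way.
Conversely, `τ : A ≅ B` on one block and `τ⁻¹` on the other give an isomorphism that swaps the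
two components.
-/

open Matrix

namespace Matrix

variable {α β γ ι κ R : Type*}

def WeightedIso (M : Matrix α α R) (M' : Matrix β β R) : Prop :=
  ∃ e : β ≃ α, M.submatrix e e = M'

namespace WeightedIso

theorem refl (M : Matrix α α R) : WeightedIso M M := ⟨Equiv.refl α, rfl⟩

theorem symm {M : Matrix α α R} {M' : Matrix β β R} (h : WeightedIso M M') :
    WeightedIso M' M := by
  obtain ⟨e, rfl⟩ := h
  exact ⟨e.symm, by simp [submatrix_submatrix]⟩

theorem trans {M : Matrix α α R} {M' : Matrix β β R} {M'' : Matrix γ γ R}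
    (h : WeightedIso M M') (h' : WeightedIso M' M'') : WeightedIso M M'' := by
  obtain ⟨e, rfl⟩ := h
  obtain ⟨e', rfl⟩ := h'
  exact ⟨e'.trans e, rfl⟩

theorem submatrix_right (M : Matrix α α R) (e : β ≃ α) : WeightedIso M (M.submatrix e e) :=
  ⟨e, rfl⟩

theorem submatrix_iff {M M' : Matrix α α R} (e : β ≃ α) :
    WeightedIso (M.submatrix e e) (M'.submatrix e e) ↔ WeightedIso M M' :=
  ⟨fun h => ((submatrix_right M e).trans h).trans (submatrix_right M' e).symm,
    fun h => ((submatrix_right M e).symm.trans h).trans (submatrix_right M' e)⟩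

theorem map {S : Type*} {M : Matrix α α R} {M' : Matrix β β R} (h : WeightedIso M M')
    (f : R → S) : WeightedIso (M.map f) (M'.map f) := by
  obtain ⟨e, rfl⟩ := h
  exact ⟨e, rfl⟩

theorem smul {S : Type*} [SMul S R] {M : Matrix α α R} {M' : Matrix β β R}
    (h : WeightedIso M M') (c : S) : WeightedIso (c • M) (c • M') := by
  obtain ⟨e, rfl⟩ := h
  exact ⟨e, rfl⟩

end WeightedIso

section Zero

variable [Zero R]

namespace WeightedIso

theorem fromBlocks_diagonal {A : Matrix α α R} {A' : Matrix β β R} {D : Matrix γ γ R}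
    {D' : Matrix κ κ R} (hA : WeightedIso A A') (hD : WeightedIso D D') :
    WeightedIso (fromBlocks A 0 0 D) (fromBlocks A' 0 0 D') := by
  obtain ⟨e, rfl⟩ := hA
  obtain ⟨e', rfl⟩ := hD
  refine ⟨e.sumCongr e', ?_⟩
  ext (i | i) (j | j) <;> rfl

theorem fromBlocks_swap (A : Matrix α α R) (D : Matrix β β R) :
    WeightedIso (fromBlocks A 0 0 D) (fromBlocks D 0 0 A) :=
  ⟨Equiv.sumComm β α, fromBlocks_submatrix_sum_swap_sum_swap A 0 0 D⟩

end WeightedIso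

def nonIsolated (M : Matrix α α R) : Set α := {i | ∃ j, M i j ≠ 0 ∨ M j i ≠ 0}

theorem nonIsolated_submatrix (M : Matrix α α R) (e : β ≃ α) :
    (M.submatrix e e).nonIsolated = e ⁻¹' M.nonIsolated := by
  ext i
  simp only [nonIsolated, Set.mem_preimage]
  exact e.exists_congr_left.trans (by simp)

theorem nonIsolated_fromBlocks_zero (A : Matrix ι ι R) :
    (fromBlocks A 0 0 (0 : Matrix κ κ R)).nonIsolated = Sum.inl '' A.nonIsolated := by
  ext (i | i) <;> simp [nonIsolated]

theorem apply_eq_zero_of_notMem_nonIsolated_left {M : Matrix α α R} {i : α}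
    (hi : i ∉ M.nonIsolated) (j : α) : M i j = 0 := by
  simp [nonIsolated] at hi
  exact (hi j).1

theorem apply_eq_zero_of_notMem_nonIsolated_right {M : Matrix α α R} {j : α}
    (hj : j ∉ M.nonIsolated) (i : α) : M i j = 0 := by
  simp [nonIsolated] at hj
  exact (hj i).2

theorem WeightedIso.of_nonIsolated_equiv [Finite ι] {A B : Matrix ι ι R}
    (g : B.nonIsolated ≃ A.nonIsolated) (hg : ∀ i j, A (g i) (g j) = B i j) :
    WeightedIso A B := by
  classical
  refine ⟨g.extendSubtype, ?_⟩
  ext i j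
  by_cases hi : i ∈ B.nonIsolated
  · by_cases hj : j ∈ B.nonIsolated
    · simpa [Equiv.extendSubtype_apply_of_mem _ _ hi, Equiv.extendSubtype_apply_of_mem _ _ hj]
        using hg ⟨i, hi⟩ ⟨j, hj⟩
    · rw [submatrix_apply, apply_eq_zero_of_notMem_nonIsolated_right hj,
        apply_eq_zero_of_notMem_nonIsolated_right (g.extendSubtype_not_mem j hj)]
  · rw [submatrix_apply, apply_eq_zero_of_notMem_nonIsolated_left hi,
      apply_eq_zero_of_notMem_nonIsolated_left (g.extendSubtype_not_mem i hi)]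

theorem WeightedIso.of_fromBlocks_zero [Finite ι] {A B : Matrix ι ι R}
    (h : WeightedIso (fromBlocks A 0 0 (0 : Matrix κ κ R)) (fromBlocks B 0 0 (0 : Matrix κ κ R))) :
    WeightedIso A B := by
  obtain ⟨e, he⟩ := h
  have himage : ⇑e '' (Sum.inl '' B.nonIsolated) = Sum.inl '' A.nonIsolated := by
    rw [← nonIsolated_fromBlocks_zero, ← nonIsolated_fromBlocks_zero, ← he,
      nonIsolated_submatrix, Set.image_preimage_eq _ e.surjective]
  let g : B.nonIsolated ≃ A.nonIsolated :=
    (Equiv.Set.image _ _ Sum.inl_injective).trans <| (e.image _).trans <|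
      (Equiv.setCongr himage).trans (Equiv.Set.image _ _ Sum.inl_injective).symm
  have hg : ∀ i, Sum.inl (g i : ι) = e (Sum.inl (i : ι)) := fun i =>
    congrArg Subtype.val ((Equiv.Set.image _ _ Sum.inl_injective).apply_symm_apply _)
  refine of_nonIsolated_equiv g fun i j => ?_
  have hij := congrFun₂ he (Sum.inl i) (Sum.inl j)
  rwa [submatrix_apply, ← hg, ← hg, fromBlocks_apply₁₁, fromBlocks_apply₁₁] at hij

def paddedUnion (κ : Type*) (A B : Matrix ι ι R) : Matrix ((ι ⊕ ι) ⊕ κ) ((ι ⊕ ι) ⊕ κ) R :=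
  fromBlocks (fromBlocks A 0 0 B) 0 0 0

end Zero

theorem map_smul_of_zero_one [MonoidWithZero R] {A : Matrix ι ι R}
    (hA : ∀ i j, A i j = 0 ∨ A i j = 1) {f : R → R} (hf : f 0 = 0) (c : R) :
    (c • A).map f = f c • A := by
  ext i j
  rcases hA i j with h | h <;> simp [h, hf]

theorem weightedIso_paddedUnion_smul_iff [Semiring R] [Finite ι] (κ : Type*)
    {A B : Matrix ι ι R} (hA : ∀ i j, A i j = 0 ∨ A i j = 1) (hB : ∀ i j, B i j = 0 ∨ B i j = 1)
    {a b : R} (ha : a ≠ 0) (hab : a ≠ b) :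
    WeightedIso (paddedUnion κ (a • A) (b • B)) (paddedUnion κ (b • A) (a • B)) ↔
      WeightedIso A B := by
  constructor
  · intro h
    classical
    -- keeping only the entries of weight `a` leaves `A ⊔ 0` and `0 ⊔ B`
    obtain ⟨f, hf0, hfa, hfb⟩ : ∃ f : R → R, f 0 = 0 ∧ f a = 1 ∧ f b = 0 :=
      ⟨fun x => if x = a then 1 else 0, by simp [ha.symm, hab.symm]⟩
    have h₁ := h.map f
    simp only [paddedUnion, fromBlocks_map, map_smul_of_zero_one hA hf0,
      map_smul_of_zero_one hB hf0, Matrix.map_zero f hf0, hfa, hfb, one_smul, zero_smul] at h₁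
    exact (h₁.trans (.fromBlocks_diagonal (.fromBlocks_swap 0 B) (.refl 0))).of_fromBlocks_zero
      |>.of_fromBlocks_zero
  · intro h
    exact (WeightedIso.fromBlocks_diagonal (.fromBlocks_diagonal (h.smul a) (h.symm.smul b))
      (.refl 0)).trans (.fromBlocks_diagonal (.fromBlocks_swap _ _) (.refl 0))

end Matrix

theorem exists_relabel_eq_iff_weightedIso {N : ℕ} (G₁ G₂ : Matrix (Fin N) (Fin N) ℝ) :
    (∃ σ : Equiv.Perm (Fin N), relabel σ G₁ = G₂) ↔ WeightedIso G₁ G₂ :=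
  ⟨fun ⟨σ, h⟩ => ⟨σ⁻¹, h⟩, fun ⟨e, h⟩ => ⟨e.symm, h⟩⟩

def finBlockEquiv {n N : ℕ} (hn : 2 * n ≤ N) : Fin N ≃ (Fin n ⊕ Fin n) ⊕ Fin (N - 2 * n) :=
  (finCongr (by omega)).trans <|
    finSumFinEquiv.symm.trans (Equiv.sumCongr finSumFinEquiv.symm (Equiv.refl _))

theorem unionW_eq_submatrix_paddedUnion {n N : ℕ} (hn : 2 * n ≤ N)
    (A B : Matrix (Fin n) (Fin n) ℝ) :
    unionW n N A B =
      (paddedUnion (Fin (N - 2 * n)) A B).submatrix (finBlockEquiv hn) (finBlockEquiv hn) := by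
  have h₁ : ∀ i, ((finBlockEquiv hn).symm (.inl (.inl i)) : ℕ) = i := fun i => rfl
  have h₂ : ∀ i, ((finBlockEquiv hn).symm (.inl (.inr i)) : ℕ) = n + i := fun i => rfl
  have h₃ : ∀ k, ((finBlockEquiv hn).symm (.inr k) : ℕ) = 2 * n + k := fun k => by
    simp [finBlockEquiv]
    omega
  ext i j
  obtain ⟨x, rfl⟩ := (finBlockEquiv hn).symm.surjective i
  obtain ⟨y, rfl⟩ := (finBlockEquiv hn).symm.surjective j
  rcases x with (x | x) | x <;> rcases y with (y | y) | y <;>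
    simp only [unionW, h₁, h₂, h₃, submatrix_apply, Equiv.apply_symm_apply, paddedUnion,
      fromBlocks_apply₁₁, fromBlocks_apply₁₂, fromBlocks_apply₂₁, fromBlocks_apply₂₂,
      Matrix.zero_apply] <;>
    split_ifs <;> first | omega | rfl | simp

theorem stmt16_general (N n : ℕ) (hn : 2 * n ≤ N)
    (A B : Matrix (Fin n) (Fin n) ℝ)
    (hA01 : ∀ i j, A i j = 0 ∨ A i j = 1) (hB01 : ∀ i j, B i j = 0 ∨ B i j = 1) :
    (∃ σ : Equiv.Perm (Fin N),
        relabel σ (unionW n N ((2 : ℝ) • A) ((3 : ℝ) • B))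
          = unionW n N ((3 : ℝ) • A) ((2 : ℝ) • B)) ↔
      ∃ τ : Equiv.Perm (Fin n), relabel τ A = B := by
  rw [exists_relabel_eq_iff_weightedIso, exists_relabel_eq_iff_weightedIso,
    unionW_eq_submatrix_paddedUnion hn, unionW_eq_submatrix_paddedUnion hn,
    WeightedIso.submatrix_iff]
  exact weightedIso_paddedUnion_smul_iff _ hA01 hB01 two_ne_zero (by norm_num)

/-- A complete set of observables on weighted graphs also solves the graph isomorphism
problem: for unweighted graphs `A`, `B`, the weighted graph `G = (2·A) ⊔ (3·B)` is
isomorphic to the weight-swapped `G' = (3·A) ⊔ (2·B)` iff `A ≅ B`. -/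
theorem stmt16 (N n : ℕ) (hn : 2 * n ≤ N) (κ : Type*)
    (O : κ → Matrix (Fin N) (Fin N) ℝ → ℝ)
    (hcomplete : ∀ G₁ G₂ : Matrix (Fin N) (Fin N) ℝ, G₁.IsSymm → G₂.IsSymm →
      ((∃ σ : Equiv.Perm (Fin N), relabel σ G₁ = G₂) ↔ ∀ k, O k G₁ = O k G₂))
    (A B : Matrix (Fin n) (Fin n) ℝ) (hA : A.IsSymm) (hB : B.IsSymm)
    (hA01 : ∀ i j, A i j = 0 ∨ A i j = 1) (hB01 : ∀ i j, B i j = 0 ∨ B i j = 1)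
    (hAd : ∀ i, A i i = 0) (hBd : ∀ i, B i i = 0) :
    (∃ σ : Equiv.Perm (Fin N),
        relabel σ (unionW n N ((2 : ℝ) • A) ((3 : ℝ) • B))
          = unionW n N ((3 : ℝ) • A) ((2 : ℝ) • B)) ↔
      ∃ τ : Equiv.Perm (Fin n), relabel τ A = B :=
  stmt16_general N n hn A B hA01 hB01
end

section
/- The invariant graph polynomial of the 'path of length 2' multigraph on 3 nodes, 6·R(x_{12}·x_{13}) evaluated on weighted graphs over 3 nodes, equals 2(x_{12}x_{13} + x_{12}x_{23} + x_{13}x_{23}) and cannot be written as a polynomial in the two degree-1 invariants Q₁ = x_{11}+x_{22}+x_{33} and Q₂ = x_{12}+x_{13}+x_{23} alone (in particular, it is not a linear combination of Q₁², Q₁Q₂, Q₂², Q₁, Q₂, 1). -/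
/-! Each of the six relabellings of the path `x₁₂x₁₃` is one of the three paths of length 2 on
three nodes, and each path is hit by exactly two of them (the permutations fixing its centre),
so `6·R(x₁₂x₁₃) = 2P`. A polynomial in `Q₁, Q₂` takes the same value at any two weightings with
the same `Q₁` and `Q₂`; the double edge `x₁₂ = 2` and the path `x₁₂ = x₁₃ = 1` both have
`Q₁ = 0, Q₂ = 2`, yet `P` is `0` on the first and `1` on the second. -/

open MvPolynomial

/-- The degree-2 invariant `x₁₂x₁₃ + x₁₂x₂₃ + x₁₃x₂₃` (sum over paths of length 2). -/
noncomputable def Ppoly : MvPolynomial (Sym2 (Fin 3)) ℝ :=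
  X s(0, 1) * X s(0, 2) + X s(0, 1) * X s(1, 2) + X s(0, 2) * X s(1, 2)

/-- The degree-1 node invariant `Q₁ = x₁₁ + x₂₂ + x₃₃`. -/
noncomputable def Q1 : MvPolynomial (Sym2 (Fin 3)) ℝ :=
  X s(0, 0) + X s(1, 1) + X s(2, 2)

/-- The degree-1 edge invariant `Q₂ = x₁₂ + x₁₃ + x₂₃`. -/
noncomputable def Q2 : MvPolynomial (Sym2 (Fin 3)) ℝ :=
  X s(0, 1) + X s(0, 2) + X s(1, 2)

/-- The Reynolds operator (group average over S₃) on polynomials in the weights of a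
3-node weighted graph. -/
noncomputable def Rey3 (p : MvPolynomial (Sym2 (Fin 3)) ℝ) : MvPolynomial (Sym2 (Fin 3)) ℝ :=
  ((6 : ℝ))⁻¹ • ∑ σ : Equiv.Perm (Fin 3), rename (Sym2.map σ) p

theorem smul_six_rey3 (p : MvPolynomial (Sym2 (Fin 3)) ℝ) :
    (6 : ℝ) • Rey3 p = ∑ σ : Equiv.Perm (Fin 3), rename (Sym2.map σ) p := by
  rw [Rey3, smul_inv_smul₀ (by norm_num)]

theorem Finset.univ_perm_fin_three : (Finset.univ : Finset (Equiv.Perm (Fin 3))) =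
    {1, Equiv.swap 0 1, Equiv.swap 0 2, Equiv.swap 1 2,
      Equiv.swap 0 1 * Equiv.swap 0 2, Equiv.swap 0 2 * Equiv.swap 0 1} := by
  decide

theorem sum_rename_path : ∑ σ : Equiv.Perm (Fin 3),
    rename (Sym2.map σ) (X s(0, 1) * X s(0, 2) : MvPolynomial (Sym2 (Fin 3)) ℝ) = 2 * Ppoly := by
  simp only [map_mul, rename_X, Sym2.map_mk, Finset.univ_perm_fin_three]
  simp (config := { decide := true }) only [Finset.mem_insert, Finset.mem_singleton,
    not_false_eq_true, Finset.sum_insert, Finset.sum_singleton, Equiv.Perm.coe_one, id_eq,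
    Equiv.Perm.coe_mul, Function.comp_apply, Equiv.swap_apply_left, Equiv.swap_apply_right,
    Equiv.swap_apply_def, ↓reduceIte]
  simp only [show s((1 : Fin 3), 0) = s(0, 1) from Sym2.eq_swap,
    show s((2 : Fin 3), 0) = s(0, 2) from Sym2.eq_swap,
    show s((2 : Fin 3), 1) = s(1, 2) from Sym2.eq_swap, Ppoly]
  ring

theorem MvPolynomial.not_exists_aeval_eq_of_eval_ne {σ ι R : Type*} [CommSemiring R]
    {p : MvPolynomial σ R} (q : ι → MvPolynomial σ R) (v w : σ → R)
    (hq : ∀ i, eval v (q i) = eval w (q i)) (hp : eval v p ≠ eval w p) :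
    ¬ ∃ F : MvPolynomial ι R, p = aeval q F := by
  rintro ⟨F, rfl⟩
  have eval_aeval (u : σ → R) : eval u (aeval q F) = aeval (fun i => eval u (q i)) F :=
    comp_aeval_apply (f := q) (aeval u) F
  exact hp (by simp only [eval_aeval, hq])

/-- `6·R(x₁₂x₁₃) = 2(x₁₂x₁₃ + x₁₂x₂₃ + x₁₃x₂₃)`, and this glocal observable is not a
polynomial in the purely global degree-1 invariants `Q₁, Q₂` alone. -/
theorem stmt19 :
    (6 : ℝ) • Rey3 (X s(0, 1) * X s(0, 2)) = 2 * Ppoly ∧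
    ¬ ∃ F : MvPolynomial (Fin 2) ℝ,
        (6 : ℝ) • Rey3 (X s(0, 1) * X s(0, 2)) = MvPolynomial.aeval ![Q1, Q2] F := by
  have path_sum : (6 : ℝ) • Rey3 (X s(0, 1) * X s(0, 2)) = 2 * Ppoly := by
    rw [smul_six_rey3, sum_rename_path]
  refine ⟨path_sum, ?_⟩
  rw [path_sum]
  refine not_exists_aeval_eq_of_eval_ne ![Q1, Q2]
    (fun e => if e = s(0, 1) then 2 else 0)
    (fun e => if e = s(0, 1) ∨ e = s(0, 2) then 1 else 0) (fun i => ?_) ?_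
  · fin_cases i <;> norm_num (config := { decide := true }) [Q1, Q2]
  · simp (config := { decide := true }) [Ppoly]
end
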